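/- Suppose K = G ⋈ H is an internal Zappa–Szép product where G and H are cancellative and conical monoids acting on each other by bijections. Then for all g ∈ G and h ∈ H, the element gh' = hg', where h' = g⁻¹ ▶ h and g' = h⁻¹ ▷ g, is the least common upper bound g ∨ h of g and h with respect to left-divisibility in K. Moreover, if g₁ ∨ h₁ = g₂ ∨ h₂ with gᵢ ∈ G, hᵢ ∈ H, then g₁ = g₂ and h₁ = h₂. -/

import Mathlib

namespace ZSPaper

/-- Internal Zappa–Szép product: every element of `K` has a unique `GH`-decomposition
and a unique `HG`-decomposition. -/
structure ZS (K : Type*) [Monoid K] (G H : Submonoid K) : Prop where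
  exGH : ∀ k : K, ∃! p : G × H, (p.1 : K) * (p.2 : K) = k
  exHG : ∀ k : K, ∃! p : H × G, (p.1 : K) * (p.2 : K) = k

variable {K : Type*} [Monoid K] {G H : Submonoid K}

/-- `h ▷ g`, defined by `h * g = (h ▷ g) * (h ◁ g)`. -/
noncomputable def ZS.rtr (zs : ZS K G H) (h : H) (g : G) : G :=
  ((zs.exGH ((h : K) * (g : K))).choose).1

/-- `h ◁ g`, defined by `h * g = (h ▷ g) * (h ◁ g)`. -/
noncomputable def ZS.rtl (zs : ZS K G H) (h : H) (g : G) : H :=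
  ((zs.exGH ((h : K) * (g : K))).choose).2

/-- `g ▶ h`, defined by `g * h = (g ▶ h) * (g ◀ h)`. -/
noncomputable def ZS.ltr (zs : ZS K G H) (g : G) (h : H) : H :=
  ((zs.exHG ((g : K) * (h : K))).choose).1

/-- `g ◀ h`, defined by `g * h = (g ▶ h) * (g ◀ h)`. -/
noncomputable def ZS.ltl (zs : ZS K G H) (g : G) (h : H) : G :=
  ((zs.exHG ((g : K) * (h : K))).choose).2

/-- Right divisibility: `x` is a suffix of `y`. -/
def RDvd {M : Type*} [Monoid M] (x y : M) : Prop := ∃ u, y = u * x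

/-- An atom of a monoid. -/
def MAtom {M : Type*} [Monoid M] (a : M) : Prop :=
  a ≠ 1 ∧ ∀ u v : M, a = u * v → u = 1 ∨ v = 1

/-- An atomic monoid: generated by its atoms, with bounded lengths of atomic
decompositions. -/
def Atomic (M : Type*) [Monoid M] : Prop :=
  (∀ x : M, ∃ l : List M, (∀ a ∈ l, MAtom a) ∧ l.prod = x) ∧
  ∀ x : M, ∃ N : ℕ, ∀ l : List M, (∀ a ∈ l, MAtom a) → l.prod = x → l.length ≤ N

/-- `m` is the least common upper bound of the set `S` with respect to
left divisibility. -/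
def IsDvdLUB {M : Type*} [Monoid M] (S : Set M) (m : M) : Prop :=
  (∀ s ∈ S, s ∣ m) ∧ ∀ n, (∀ s ∈ S, s ∣ n) → m ∣ n

/-- `m` is the least common upper bound of `x` and `y` with respect to left
divisibility. -/
def IsDvdLCM {M : Type*} [Monoid M] (x y m : M) : Prop :=
  x ∣ m ∧ y ∣ m ∧ ∀ n, x ∣ n → y ∣ n → m ∣ n

/-- `d = Δ_x`, the least common upper bound of `{ y \ x : y ∈ M }`, where
`y * (y \ x) = y ∨ x`. -/
def IsDeltaOf {M : Type*} [Monoid M] (x d : M) : Prop :=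
  IsDvdLUB {t : M | ∃ y, IsDvdLCM y x (y * t)} d

/-- A Garside structure on a monoid `M` with Garside element `Δ`. -/
structure GarsideStructure (M : Type*) [Monoid M] (Δ : M) : Prop where
  mul_left_cancel : ∀ a b c : M, a * b = a * c → b = c
  mul_right_cancel : ∀ a b c : M, b * a = c * a → b = c
  atomic : Atomic M
  meet_left : ∀ x y : M, ∃ d, d ∣ x ∧ d ∣ y ∧ ∀ e, e ∣ x → e ∣ y → e ∣ d
  join_left : ∀ x y : M, ∃ m, x ∣ m ∧ y ∣ m ∧ ∀ n, x ∣ n → y ∣ n → m ∣ n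
  meet_right : ∀ x y : M, ∃ d, RDvd d x ∧ RDvd d y ∧ ∀ e, RDvd e x → RDvd e y → RDvd e d
  join_right : ∀ x y : M, ∃ m, RDvd x m ∧ RDvd y m ∧ ∀ n, RDvd x n → RDvd y n → RDvd m n
  balanced : ∀ x, x ∣ Δ ↔ RDvd x Δ
  div_finite : {x : M | x ∣ Δ}.Finite
  div_gen : Submonoid.closure {x : M | x ∣ Δ} = ⊤

end ZSPaper

/-!
Write `h' = g⁻¹ ▶ h`, so that `g h' = h (g ◀ h')`; then `h ▷ (g ◀ h') = g`, and injectivity of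
`h ▷ ·` identifies `g ◀ h'` with `g' = h⁻¹ ▷ g`. For minimality, a common multiple `n = g a = h b`
with `a = t g₀` in `HG`-form is `n = (g ▶ t)(g ◀ t) g₀`, so uniqueness of `HG`-decompositions
makes `h` a left divisor of `g ▶ t` in `H`. Since `g ▶ ·` is a bijection satisfying
`g ▶ (x y) = (g ▶ x)((g ◀ x) ▶ y)`, it reflects left divisibility, so `h'` divides `t` and
`g h'` divides `n`. Uniqueness of `GH`-decompositions gives the last claim, applying `g ▶ ·`
to recover `h` from `h'`.
-/

namespace ZSPaper.ZS

variable {K : Type*} [Monoid K] {G H : Submonoid K}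

theorem rtr_mul_rtl (zs : ZS K G H) (h : H) (g : G) : (zs.rtr h g : K) * zs.rtl h g = h * g :=
  (zs.exGH ((h : K) * g)).choose_spec.1

theorem ltr_mul_ltl (zs : ZS K G H) (g : G) (h : H) : (zs.ltr g h : K) * zs.ltl g h = g * h :=
  (zs.exHG ((g : K) * h)).choose_spec.1

theorem gh_mul_inj (zs : ZS K G H) {g₁ g₂ : G} {h₁ h₂ : H} :
    (g₁ : K) * h₁ = g₂ * h₂ ↔ g₁ = g₂ ∧ h₁ = h₂ := by
  refine ⟨fun e => ?_, fun ⟨hg, hh⟩ => hg ▸ hh ▸ rfl⟩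
  exact Prod.ext_iff.mp <|
    (zs.exGH ((g₂ : K) * h₂)).unique (y₁ := (g₁, h₁)) (y₂ := (g₂, h₂)) e rfl

theorem hg_mul_inj (zs : ZS K G H) {h₁ h₂ : H} {g₁ g₂ : G} :
    (h₁ : K) * g₁ = h₂ * g₂ ↔ h₁ = h₂ ∧ g₁ = g₂ := by
  refine ⟨fun e => ?_, fun ⟨hh, hg⟩ => hg ▸ hh ▸ rfl⟩
  exact Prod.ext_iff.mp <|
    (zs.exHG ((h₂ : K) * g₂)).unique (y₁ := (h₁, g₁)) (y₂ := (h₂, g₂)) e rfl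

theorem rtr_eq_of_mul_eq (zs : ZS K G H) {h h' : H} {g g' : G} (e : (h : K) * g = g' * h') :
    zs.rtr h g = g' :=
  ((zs.gh_mul_inj).mp ((zs.rtr_mul_rtl h g).trans e)).1

theorem ltr_eq_of_mul_eq (zs : ZS K G H) {h h' : H} {g g' : G} (e : (g : K) * h = h' * g') :
    zs.ltr g h = h' :=
  ((zs.hg_mul_inj).mp ((zs.ltr_mul_ltl g h).trans e)).1

theorem ltr_mul (zs : ZS K G H) (g : G) (x y : H) :
    zs.ltr g (x * y) = zs.ltr g x * zs.ltr (zs.ltl g x) y := by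
  apply zs.ltr_eq_of_mul_eq (g' := zs.ltl (zs.ltl g x) y)
  push_cast
  rw [← mul_assoc, ← zs.ltr_mul_ltl g x, mul_assoc, ← zs.ltr_mul_ltl (zs.ltl g x) y,
    ← mul_assoc]

theorem mul_eq_mul_ltl_of_ltr_eq (zs : ZS K G H) {g : G} {h h' : H} (hh : zs.ltr g h' = h) :
    (g : K) * h' = h * zs.ltl g h' := by
  rw [← zs.ltr_mul_ltl, hh]

theorem rtr_ltl_of_ltr_eq (zs : ZS K G H) {g : G} {h h' : H} (hh : zs.ltr g h' = h) :
    zs.rtr h (zs.ltl g h') = g :=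
  zs.rtr_eq_of_mul_eq (zs.mul_eq_mul_ltl_of_ltr_eq hh).symm

theorem dvd_of_ltr_dvd_ltr (zs : ZS K G H) (hb : ∀ g : G, Function.Bijective (zs.ltr g))
    {g : G} {x t : H}
    (hdvd : zs.ltr g x ∣ zs.ltr g t) : x ∣ t := by
  obtain ⟨c, hc⟩ := hdvd
  obtain ⟨s, rfl⟩ := (hb (zs.ltl g x)).surjective c
  exact ⟨s, (hb g).injective (by rw [zs.ltr_mul, hc])⟩

theorem isDvdLCM_of_ltr_eq (zs : ZS K G H) (hb : ∀ g : G, Function.Bijective (zs.ltr g))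
    {g : G} {h h' : H}
    (hh : zs.ltr g h' = h) : IsDvdLCM (g : K) h (g * h') := by
  refine ⟨dvd_mul_right _ _, ⟨_, zs.mul_eq_mul_ltl_of_ltr_eq hh⟩, ?_⟩
  rintro n ⟨a, rfl⟩ ⟨b, hb'⟩
  obtain ⟨⟨t, g₀⟩, rfl : (t : K) * g₀ = a, -⟩ := zs.exHG a
  obtain ⟨⟨h₂, g₂⟩, rfl : (h₂ : K) * g₂ = b, -⟩ := zs.exHG b
  have hsplit :
      ((zs.ltr g t : H) : K) * ((zs.ltl g t * g₀ : G) : K) = ((h * h₂ : H) : K) * g₂ := by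
    push_cast
    rw [← mul_assoc, zs.ltr_mul_ltl, mul_assoc, mul_assoc, hb']
  have hdvd : zs.ltr g h' ∣ zs.ltr g t := ⟨h₂, by rw [hh, ((zs.hg_mul_inj).mp hsplit).1]⟩
  obtain ⟨s, rfl⟩ := zs.dvd_of_ltr_dvd_ltr hb hdvd
  exact ⟨s * g₀, by push_cast; simp only [mul_assoc]⟩

end ZSPaper.ZS

open ZSPaper Function

theorem stmt14_general {K : Type*} [Monoid K] {G H : Submonoid K} (zs : ZS K G H)
    (hb₁ : ∀ h : H, Function.Bijective (zs.rtr h))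
    (hb₄ : ∀ g : G, Function.Bijective (zs.ltr g)) :
    (∀ (g : G) (h : H),
      (g : K) * ((invFun (zs.ltr g) h : H) : K) = (h : K) * ((invFun (zs.rtr h) g : G) : K) ∧
      IsDvdLCM (g : K) (h : K) ((g : K) * ((invFun (zs.ltr g) h : H) : K))) ∧
    (∀ (g₁ g₂ : G) (h₁ h₂ : H),
      (g₁ : K) * ((invFun (zs.ltr g₁) h₁ : H) : K) = (g₂ : K) * ((invFun (zs.ltr g₂) h₂ : H) : K) →
        g₁ = g₂ ∧ h₁ = h₂) := by
  have ltr_invFun : ∀ (g : G) (h : H), zs.ltr g (invFun (zs.ltr g) h) = h :=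
    fun g => rightInverse_invFun (hb₄ g).surjective
  refine ⟨fun g h => ⟨?_, zs.isDvdLCM_of_ltr_eq hb₄ (ltr_invFun g h)⟩, ?_⟩
  · have hltl : zs.ltl g (invFun (zs.ltr g) h) = invFun (zs.rtr h) g :=
      (hb₁ h).injective <| by
        rw [zs.rtr_ltl_of_ltr_eq (ltr_invFun g h), rightInverse_invFun (hb₁ h).surjective]
    rw [zs.mul_eq_mul_ltl_of_ltr_eq (ltr_invFun g h), hltl]
  · intro g₁ g₂ h₁ h₂ e
    obtain ⟨rfl, eh⟩ := zs.gh_mul_inj.mp e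
    exact ⟨rfl, by rw [← ltr_invFun g₁ h₁, eh, ltr_invFun]⟩

theorem stmt14 {K : Type*} [Monoid K] {G H : Submonoid K} (zs : ZS K G H)
    (hGl : ∀ a b c : G, a * b = a * c → b = c)
    (hGr : ∀ a b c : G, b * a = c * a → b = c)
    (hHl : ∀ a b c : H, a * b = a * c → b = c)
    (hHr : ∀ a b c : H, b * a = c * a → b = c)
    (hGcon : ∀ a b : G, a * b = 1 → a = 1 ∧ b = 1)
    (hHcon : ∀ a b : H, a * b = 1 → a = 1 ∧ b = 1)
    (hb₁ : ∀ h : H, Function.Bijective (zs.rtr h))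
    (hb₂ : ∀ h : H, Function.Bijective (fun g : G => zs.ltl g h))
    (hb₃ : ∀ g : G, Function.Bijective (fun h : H => zs.rtl h g))
    (hb₄ : ∀ g : G, Function.Bijective (zs.ltr g)) :
    (∀ (g : G) (h : H),
      (g : K) * ((invFun (zs.ltr g) h : H) : K) = (h : K) * ((invFun (zs.rtr h) g : G) : K) ∧
      IsDvdLCM (g : K) (h : K) ((g : K) * ((invFun (zs.ltr g) h : H) : K))) ∧
    (∀ (g₁ g₂ : G) (h₁ h₂ : H),
      (g₁ : K) * ((invFun (zs.ltr g₁) h₁ : H) : K) = (g₂ : K) * ((invFun (zs.ltr g₂) h₂ : H) : K) →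
        g₁ = g₂ ∧ h₁ = h₂) :=
  stmt14_general zs hb₁ hb₄
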